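/- Unbalanced type α dynamics on the dual projective plane (Lemma 2.11, diagonal case): Let a_n = diag(1, β_n, γ_n) ∈ GL(3,ℝ) with 0 < γ_n ≤ β_n ≤ 1 for all n, β_n → 0 and γ_n/β_n → λ for some λ ∈ (0,1], acting on the dual projective plane ℝP²*. Then: (1) for every [f] = [f₁:f₂:f₃]* ∈ ℝP²* with [f] ≠ [1:0:0]*, the dynamic set D_{(a_n)}([f]) equals {[0 : λf₂ : f₃]*}; (2) D_{(a_n)}([1:0:0]*) = ℝP²*. -/

import Mathlib

open Matrix Filter Topology Set

noncomputable section

/-- `V3` is `ℝ³`. -/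
abbrev V3 : Type := Fin 3 → ℝ

/-- The group `GL(3,ℝ)` of invertible `3 × 3` real matrices. -/
abbrev GL3 : Type := (Matrix (Fin 3) (Fin 3) ℝ)ˣ

/-- Nonzero vectors of `ℝ³` up to a nonzero scalar. -/
def projSetoid : Setoid {v : V3 // v ≠ 0} where
  r v w := ∃ c : ℝ, c ≠ 0 ∧ w.1 = c • v.1
  iseqv := by
    refine ⟨fun v => ⟨1, one_ne_zero, (one_smul ℝ v.1).symm⟩, ?_, ?_⟩
    · rintro v w ⟨c, hc, h⟩
      exact ⟨c⁻¹, inv_ne_zero hc, by rw [h, smul_smul, inv_mul_cancel₀ hc, one_smul]⟩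
    · rintro u v w ⟨c, hc, h⟩ ⟨d, hd, h'⟩
      exact ⟨d * c, mul_ne_zero hd hc, by rw [h', h, smul_smul]⟩

/-- The real projective plane `ℝP²`, as the quotient of `ℝ³ \ {0}` by nonzero scalings,
with the quotient topology.  (We use the same model for the dual projective plane `ℝP²*`,
a class `[f₁ : f₂ : f₃]*` of linear forms being recorded through its coefficient
vector `(f₁, f₂, f₃)`; the form acts on vectors by the dot product.) -/
def RP2 : Type := Quotient projSetoid

/-- The projective class `[v]` of a nonzero vector. -/
def RP2.mk (v : V3) (hv : v ≠ 0) : RP2 := Quotient.mk projSetoid ⟨v, hv⟩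

instance : TopologicalSpace RP2 :=
  inferInstanceAs (TopologicalSpace (Quotient projSetoid))

lemma RP2.ind {P : RP2 → Prop} (h : ∀ (v : V3) (hv : v ≠ 0), P (RP2.mk v hv)) (p : RP2) : P p := by
  refine Quotient.ind (fun a => ?_) p
  exact h a.1 a.2

lemma RP2.mk_eq_mk_iff {v w : V3} {hv : v ≠ 0} {hw : w ≠ 0} :
    RP2.mk v hv = RP2.mk w hw ↔ ∃ c : ℝ, c ≠ 0 ∧ w = c • v :=
  ⟨fun h => Quotient.exact h, fun h => Quotient.sound h⟩

lemma ne_zero_of_coord {v : V3} (i : Fin 3) (h : v i ≠ 0) : v ≠ 0 :=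
  fun h0 => h (by rw [h0]; rfl)

/-- The projective class of a vector, defaulting to `[e₁]` for the zero vector. -/
def RP2.mk' (v : V3) : RP2 :=
  if h : v = 0 then RP2.mk ![1, 0, 0] (ne_zero_of_coord 0 (by simp)) else RP2.mk v h

lemma e1_ne : (![1, 0, 0] : V3) ≠ 0 := ne_zero_of_coord 0 (by norm_num)

lemma e3_ne : (![0, 0, 1] : V3) ≠ 0 := ne_zero_of_coord 2 (by simp)

lemma GL3.mulVec_ne {g : GL3} {v : V3} (hv : v ≠ 0) :
    (g : Matrix (Fin 3) (Fin 3) ℝ) *ᵥ v ≠ 0 := by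
  intro h
  apply hv
  have h2 : ((g⁻¹ : GL3) : Matrix (Fin 3) (Fin 3) ℝ) *ᵥ
      ((g : Matrix (Fin 3) (Fin 3) ℝ) *ᵥ v) = 0 := by rw [h, Matrix.mulVec_zero]
  rwa [Matrix.mulVec_mulVec, Units.inv_mul, Matrix.one_mulVec] at h2

/-- The action of `g ∈ GL(3,ℝ)` on `ℝP²`, `g · [v] = [g v]`. -/
def RP2.mapMat (g : GL3) : RP2 → RP2 :=
  Quotient.lift
    (fun a : {v : V3 // v ≠ 0} =>
      RP2.mk ((g : Matrix (Fin 3) (Fin 3) ℝ) *ᵥ a.1) (GL3.mulVec_ne a.2))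
    (by
      rintro a b ⟨c, hc, h⟩
      apply Quotient.sound
      refine ⟨c, hc, ?_⟩
      show (g : Matrix (Fin 3) (Fin 3) ℝ) *ᵥ b.1 = c • ((g : Matrix (Fin 3) (Fin 3) ℝ) *ᵥ a.1)
      rw [h, Matrix.mulVec_smul])

lemma RP2.mapMat_mk (g : GL3) (v : V3) (hv : v ≠ 0) :
    RP2.mapMat g (RP2.mk v hv) =
      RP2.mk ((g : Matrix (Fin 3) (Fin 3) ℝ) *ᵥ v) (GL3.mulVec_ne hv) := rfl

/-- The element of `GL(3,ℝ)` acting on coefficient vectors of linear forms the way `g`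
acts on `ℝP²*`:  the coefficient vector of `f ∘ g⁻¹` is `(g⁻¹)ᵀ` applied to that of `f`. -/
def dualGL (g : GL3) : GL3 where
  val := ((g⁻¹ : GL3) : Matrix (Fin 3) (Fin 3) ℝ)ᵀ
  inv := ((g : GL3) : Matrix (Fin 3) (Fin 3) ℝ)ᵀ
  val_inv := by rw [← Matrix.transpose_mul, Units.mul_inv, Matrix.transpose_one]
  inv_val := by rw [← Matrix.transpose_mul, Units.inv_mul, Matrix.transpose_one]

/-- The flag space `X`: pairs `([v], [f]) ∈ ℝP² × ℝP²*` with `f(v) = 0`. -/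
def FlagSpace : Set (RP2 × RP2) :=
  {x | ∀ (v f : V3) (hv : v ≠ 0) (hf : f ≠ 0),
    x.1 = RP2.mk v hv → x.2 = RP2.mk f hf → f ⬝ᵥ v = 0}

/-- Points of the flag space. -/
abbrev Flag3 : Type := ↥FlagSpace

lemma mem_flagSpace_mk {v f : V3} (hv : v ≠ 0) (hf : f ≠ 0) (h : f ⬝ᵥ v = 0) :
    (RP2.mk v hv, RP2.mk f hf) ∈ FlagSpace := by
  rintro v' f' hv' hf' hp hq
  obtain ⟨c, hc, hcv⟩ := RP2.mk_eq_mk_iff.1 hp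
  obtain ⟨d, hd, hdf⟩ := RP2.mk_eq_mk_iff.1 hq
  rw [hcv, hdf, smul_dotProduct, dotProduct_smul, h]
  simp

lemma dot_invariance (g : GL3) (v f : V3) :
    (((dualGL g : GL3) : Matrix (Fin 3) (Fin 3) ℝ) *ᵥ f) ⬝ᵥ
      ((g : Matrix (Fin 3) (Fin 3) ℝ) *ᵥ v) = f ⬝ᵥ v := by
  have h1 : ((dualGL g : GL3) : Matrix (Fin 3) (Fin 3) ℝ) *ᵥ f =
      f ᵥ* ((g⁻¹ : GL3) : Matrix (Fin 3) (Fin 3) ℝ) := Matrix.mulVec_transpose _ _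
  rw [h1, Matrix.dotProduct_mulVec, Matrix.vecMul_vecMul, Units.inv_mul, Matrix.vecMul_one]

lemma flagPair_mem (g : GL3) {x : RP2 × RP2} (hx : x ∈ FlagSpace) :
    (RP2.mapMat g x.1, RP2.mapMat (dualGL g) x.2) ∈ FlagSpace := by
  obtain ⟨p, q⟩ := x
  revert hx
  refine Quotient.inductionOn₂ p q ?_
  rintro ⟨v, hv⟩ ⟨f, hf⟩ hx
  have h0 : f ⬝ᵥ v = 0 := hx v f hv hf rfl rfl
  exact mem_flagSpace_mk _ _ (by rw [dot_invariance]; exact h0)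

/-- The action of `g ∈ GL(3,ℝ)` on the flag space,
`g · ([v], [f]) = ([g v], [f ∘ g⁻¹])`. -/
def flagMap (g : GL3) (x : Flag3) : Flag3 :=
  ⟨(RP2.mapMat g x.1.1, RP2.mapMat (dualGL g) x.1.2), flagPair_mem g x.2⟩

/-! ### Composition laws and continuity -/

lemma RP2.mapMat_mapMat (g h : GL3) (p : RP2) :
    RP2.mapMat g (RP2.mapMat h p) = RP2.mapMat (g * h) p := by
  refine Quotient.inductionOn p fun a => ?_
  apply Quotient.sound
  exact ⟨1, one_ne_zero, by simp [Matrix.mulVec_mulVec, Units.val_mul]⟩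

lemma RP2.mapMat_one (p : RP2) : RP2.mapMat 1 p = p := by
  refine Quotient.inductionOn p fun a => ?_
  apply Quotient.sound
  exact ⟨1, one_ne_zero, by simp [Matrix.one_mulVec, Units.val_one]⟩

lemma dualGL_mul (g h : GL3) : dualGL (g * h) = dualGL g * dualGL h := by
  apply Units.ext
  rw [Units.val_mul]
  show (((g * h)⁻¹ : GL3) : Matrix (Fin 3) (Fin 3) ℝ)ᵀ =
    ((g⁻¹ : GL3) : Matrix (Fin 3) (Fin 3) ℝ)ᵀ * ((h⁻¹ : GL3) : Matrix (Fin 3) (Fin 3) ℝ)ᵀ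
  rw [_root_.mul_inv_rev, Units.val_mul, Matrix.transpose_mul]

lemma dualGL_one : dualGL (1 : GL3) = 1 := by
  apply Units.ext
  show (((1 : GL3)⁻¹ : GL3) : Matrix (Fin 3) (Fin 3) ℝ)ᵀ = ((1 : GL3) : Matrix (Fin 3) (Fin 3) ℝ)
  rw [inv_one, Units.val_one, Matrix.transpose_one]

lemma flagMap_flagMap (g h : GL3) (x : Flag3) :
    flagMap g (flagMap h x) = flagMap (g * h) x := by
  apply Subtype.ext
  apply Prod.ext
  · exact RP2.mapMat_mapMat g h x.1.1
  · show RP2.mapMat (dualGL g) (RP2.mapMat (dualGL h) x.1.2) = RP2.mapMat (dualGL (g * h)) x.1.2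
    rw [RP2.mapMat_mapMat, dualGL_mul]

lemma flagMap_one (x : Flag3) : flagMap 1 x = x := by
  apply Subtype.ext
  apply Prod.ext
  · exact RP2.mapMat_one x.1.1
  · show RP2.mapMat (dualGL 1) x.1.2 = x.1.2
    rw [dualGL_one, RP2.mapMat_one]

lemma continuous_mulVec (M : Matrix (Fin 3) (Fin 3) ℝ) :
    Continuous fun v : V3 => M *ᵥ v := by
  have h : (fun v : V3 => M *ᵥ v) = fun v => fun i => ∑ j, M i j * v j := by
    funext v i
    simp [Matrix.mulVec, dotProduct]
  rw [h]
  exact continuous_pi fun i =>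
    continuous_finset_sum _ fun j _ => continuous_const.mul (continuous_apply j)

lemma continuous_mapMat (g : GL3) : Continuous (RP2.mapMat g) := by
  apply Continuous.quotient_lift
  exact continuous_quotient_mk'.comp
    (Continuous.subtype_mk ((continuous_mulVec _).comp continuous_subtype_val) _)

lemma continuous_flagMap (g : GL3) : Continuous (flagMap g) := by
  apply Continuous.subtype_mk
  exact ((continuous_mapMat g).comp (continuous_fst.comp continuous_subtype_val)).prodMk
    ((continuous_mapMat (dualGL g)).comp (continuous_snd.comp continuous_subtype_val))

/-- The action of `g ∈ GL(3,ℝ)` on the flag space, as a homeomorphism. -/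
def flagHomeo (g : GL3) : Flag3 ≃ₜ Flag3 where
  toFun := flagMap g
  invFun := flagMap g⁻¹
  left_inv := fun x => by rw [flagMap_flagMap, inv_mul_cancel, flagMap_one]
  right_inv := fun x => by rw [flagMap_flagMap, mul_inv_cancel, flagMap_one]
  continuous_toFun := continuous_flagMap g
  continuous_invFun := continuous_flagMap g⁻¹

/-- The group of homeomorphisms of a topological space
(with `(f * g) x = f (g x)`). -/
instance homeoGroup (Z : Type*) [TopologicalSpace Z] : Group (Z ≃ₜ Z) where
  mul f g := g.trans f
  one := Homeomorph.refl Z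
  inv := Homeomorph.symm
  mul_assoc _ _ _ := Homeomorph.ext fun _ => rfl
  one_mul _ := Homeomorph.ext fun _ => rfl
  mul_one _ := Homeomorph.ext fun _ => rfl
  inv_mul_cancel f := Homeomorph.ext fun x => f.symm_apply_apply x

/-! ### Geometric objects in the flag space -/

/-- The α-circle of a point `p ∈ ℝP²`: all flags whose point is `p`. -/
def Cα (p : RP2) : Set Flag3 := {x | x.1.1 = p}

/-- The β-circle of the projective line with defining form (class) `q`:
all flags whose plane is `ker q`. -/
def Cβ (q : RP2) : Set Flag3 := {x | x.1.2 = q}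

/-- The plane of the flag `x` contains the direction of the vector `u`. -/
def planeContains (x : Flag3) (u : V3) : Prop :=
  ∀ (f : V3) (hf : f ≠ 0), x.1.2 = RP2.mk f hf → f ⬝ᵥ u = 0

/-- The point of the flag `x` lies on the projective line defined by the linear
form of coefficients `w`. -/
def pointOnForm (x : Flag3) (w : V3) : Prop :=
  ∀ (v : V3) (hv : v ≠ 0), x.1.1 = RP2.mk v hv → w ⬝ᵥ v = 0

/-- The β-circle of the projective line spanned by the (independent) directions of
`u` and `w`: all flags whose plane contains both. -/
def CβSpan (u w : V3) : Set Flag3 := {x | planeContains x u ∧ planeContains x w}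

lemma li_ne_zero_0 {v1 v2 v3 : V3} (h : LinearIndependent ℝ ![v1, v2, v3]) : v1 ≠ 0 := by
  have := h.ne_zero 0; simpa using this

lemma li_ne_zero_1 {v1 v2 v3 : V3} (h : LinearIndependent ℝ ![v1, v2, v3]) : v2 ≠ 0 := by
  have := h.ne_zero 1; simpa using this

lemma li_ne_zero_2 {v1 v2 v3 : V3} (h : LinearIndependent ℝ ![v1, v2, v3]) : v3 ≠ 0 := by
  have := h.ne_zero 2; simpa using this

/-- The repulsive bouquet of circles `B⁻(g) = C_α([v₃]) ∪ C_β(span(v₂,v₃))` of a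
loxodromic element with eigenvectors `v₁, v₂, v₃` (eigenvalues in decreasing order
of modulus). -/
def bouquetMinus (v2 v3 : V3) (h3 : v3 ≠ 0) : Set Flag3 :=
  Cα (RP2.mk v3 h3) ∪ CβSpan v2 v3

/-- The attractive bouquet of circles `B⁺(g) = C_α([v₁]) ∪ C_β(span(v₁,v₂))`. -/
def bouquetPlus (v1 v2 : V3) (h1 : v1 ≠ 0) : Set Flag3 :=
  Cα (RP2.mk v1 h1) ∪ CβSpan v1 v2

/-- The dynamic set of a point `x` under a sequence of maps `g n`: all limits of
`g (n k) (x k)` for a strictly increasing sequence `(n k)` and a sequence `x k → x`. -/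
def DynSet {M : Type*} [TopologicalSpace M] (g : ℕ → M → M) (x : M) : Set M :=
  {y | ∃ φ : ℕ → ℕ, StrictMono φ ∧ ∃ u : ℕ → M,
    Tendsto u atTop (𝓝 x) ∧ Tendsto (fun k => g (φ k) (u k)) atTop (𝓝 y)}

end

/-!
On coefficient vectors of forms, `aₙ` acts by `diag(1, βₙ⁻¹, γₙ⁻¹)`, i.e. projectively by
`diag(γₙ, γₙ/βₙ, 1) → diag(0, λ, 1)`. Lifting a sequence `[fₖ] → [f]` to vectors `fₖ → c f`,
the images converge to `[0 : λ f₂ : f₃]` as soon as this vector is nonzero, i.e. `[f] ≠ [1:0:0]`.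
Conversely every `[w]` is a limit of images of points tending to `[1:0:0]`: of
`[w₀ : β w₁ : γ w₂]` if `w₀ ≠ 0`, and of `[1 : √β w₁ : (γ/β) √β w₂]`, with images
`[√β : w₁ : w₂]`, if `w₀ = 0`.
-/

namespace RP2

lemma mk'_eq_mk {v : V3} (hv : v ≠ 0) : RP2.mk' v = RP2.mk v hv := dif_neg hv

lemma mk'_smul {c : ℝ} (hc : c ≠ 0) (v : V3) : RP2.mk' (c • v) = RP2.mk' v := by
  by_cases hv : v = 0
  · rw [hv, smul_zero]
  · rw [mk'_eq_mk hv, mk'_eq_mk (smul_ne_zero hc hv)]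
    exact mk_eq_mk_iff.2 ⟨c⁻¹, inv_ne_zero hc, by rw [smul_smul, inv_mul_cancel₀ hc, one_smul]⟩

lemma continuousOn_mk' : ContinuousOn RP2.mk' {v | v ≠ 0} := by
  rw [continuousOn_iff_continuous_domRestrict]
  have h : {v : V3 | v ≠ 0}.domRestrict RP2.mk' = Quotient.mk projSetoid :=
    funext fun v => mk'_eq_mk v.2
  rw [h]
  exact continuous_quotient_mk'

lemma tendsto_mk' {ι : Type*} {l : Filter ι} {w : ι → V3} {W : V3} (hW : W ≠ 0)
    (h : Tendsto w l (𝓝 W)) : Tendsto (fun k => RP2.mk' (w k)) l (𝓝 (RP2.mk W hW)) := by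
  rw [← mk'_eq_mk hW]
  exact ((continuousOn_mk'.continuousAt (isOpen_ne.mem_nhds hW)).tendsto).comp h

/-- The orthogonal projection onto the line `p`, with `j`-th row `(v j / v ⬝ᵥ v) • v` for any
representative `v`. It embeds `ℝP²` continuously into matrices, and its nonzero rows are
continuous local lifts of `ℝP²` to `ℝ³`. -/
noncomputable def orthoProj : RP2 → Fin 3 → V3 :=
  Quotient.lift (fun a : {v : V3 // v ≠ 0} => fun j => (a.1 j / (a.1 ⬝ᵥ a.1)) • a.1) (by
    rintro ⟨v, hv⟩ ⟨w, hw⟩ ⟨c, hc, rfl⟩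
    have hvv : v ⬝ᵥ v ≠ 0 := fun h => hv (dotProduct_self_eq_zero.1 h)
    funext j i
    simp only [smul_dotProduct, dotProduct_smul, Pi.smul_apply, smul_eq_mul]
    field_simp)

lemma orthoProj_mk (v : V3) (hv : v ≠ 0) (j : Fin 3) :
    orthoProj (RP2.mk v hv) j = (v j / (v ⬝ᵥ v)) • v := rfl

lemma continuous_orthoProj : Continuous orthoProj := by
  refine Continuous.quotient_lift (continuous_pi fun j => ?_) _
  have hv : Continuous fun a : {v : V3 // v ≠ 0} => a.1 := continuous_subtype_val
  exact (((continuous_apply j).comp hv).div (hv.dotProduct hv)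
    fun a => fun h => a.2 (dotProduct_self_eq_zero.1 h)).smul hv

lemma mk_orthoProj {p : RP2} {j : Fin 3} (h : orthoProj p j ≠ 0) :
    RP2.mk (orthoProj p j) h = p := by
  induction p using RP2.ind with
  | h v hv =>
    have hc : v j / (v ⬝ᵥ v) ≠ 0 := fun h0 => h (by rw [orthoProj_mk, h0, zero_smul])
    exact (mk_eq_mk_iff.2 ⟨v j / (v ⬝ᵥ v), hc, rfl⟩).symm

lemma orthoProj_mk_ne_zero {v : V3} (hv : v ≠ 0) {j : Fin 3} (hj : v j ≠ 0) :
    orthoProj (RP2.mk v hv) j ≠ 0 :=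
  smul_ne_zero (div_ne_zero hj fun h => hv (dotProduct_self_eq_zero.1 h)) hv

lemma exists_orthoProj_ne_zero (p : RP2) : ∃ j, orthoProj p j ≠ 0 := by
  induction p using RP2.ind with
  | h v hv =>
    obtain ⟨j, hj⟩ := Function.ne_iff.1 hv
    exact ⟨j, orthoProj_mk_ne_zero hv hj⟩

lemma orthoProj_injective : Function.Injective orthoProj := by
  intro p q h
  obtain ⟨j, hj⟩ := exists_orthoProj_ne_zero p
  rw [← mk_orthoProj hj, ← mk_orthoProj (h ▸ hj : orthoProj q j ≠ 0)]
  simp only [h]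

instance : T2Space RP2 := .of_injective_continuous orthoProj_injective continuous_orthoProj

lemma exists_lift_of_tendsto {ι : Type*} {l : Filter ι} {p : ι → RP2} {f : V3} {hf : f ≠ 0}
    (h : Tendsto p l (𝓝 (RP2.mk f hf))) :
    ∃ w : ι → V3, ∃ c : ℝ, c ≠ 0 ∧ Tendsto w l (𝓝 (c • f)) ∧ ∀ᶠ k in l, RP2.mk' (w k) = p k := by
  obtain ⟨j, hj⟩ := Function.ne_iff.1 hf
  have hw : Tendsto (fun k => orthoProj (p k) j) l (𝓝 (orthoProj (RP2.mk f hf) j)) :=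
    ((continuous_apply j).comp continuous_orthoProj).continuousAt.tendsto.comp h
  refine ⟨fun k => orthoProj (p k) j, f j / (f ⬝ᵥ f),
    div_ne_zero hj fun h => hf (dotProduct_self_eq_zero.1 h), hw, ?_⟩
  filter_upwards [hw.eventually_ne (orthoProj_mk_ne_zero hf hj)] with k hk
  rw [mk'_eq_mk hk, mk_orthoProj]

end RP2

section DynSet

variable {M : Type*} [TopologicalSpace M] {g : ℕ → M → M} {x : M}

lemma mem_dynSet_of_tendsto {y : M} {u : ℕ → M} (hu : Tendsto u atTop (𝓝 x))
    (hgu : Tendsto (fun n => g n (u n)) atTop (𝓝 y)) : y ∈ DynSet g x :=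
  ⟨id, strictMono_id, u, hu, hgu⟩

lemma dynSet_eq_singleton [T2Space M] {z : M}
    (h : ∀ φ : ℕ → ℕ, StrictMono φ → ∀ u : ℕ → M, Tendsto u atTop (𝓝 x) →
      Tendsto (fun k => g (φ k) (u k)) atTop (𝓝 z)) :
    DynSet g x = {z} := by
  ext y
  constructor
  · rintro ⟨φ, hφ, u, hu, hy⟩
    exact tendsto_nhds_unique hy (h φ hφ u hu)
  · rintro rfl
    exact mem_dynSet_of_tendsto tendsto_const_nhds (h id strictMono_id _ tendsto_const_nhds)

end DynSet

lemma GL3.ne_zero_of_val_eq_diagonal {g : GL3} {d : V3}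
    (hg : (g : Matrix (Fin 3) (Fin 3) ℝ) = diagonal d) (i : Fin 3) : d i ≠ 0 :=
  ((Pi.isUnit_iff.1 (isUnit_diagonal.1 (hg ▸ g.isUnit))) i).ne_zero

lemma dualGL_val_of_val_eq_diagonal {g : GL3} {d : V3}
    (hg : (g : Matrix (Fin 3) (Fin 3) ℝ) = diagonal d) :
    (dualGL g : Matrix (Fin 3) (Fin 3) ℝ) = diagonal d⁻¹ := by
  have hd := GL3.ne_zero_of_val_eq_diagonal hg
  have hinv : ((g⁻¹ : GL3) : Matrix (Fin 3) (Fin 3) ℝ) = diagonal d⁻¹ := by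
    refine Units.inv_eq_of_mul_eq_one_right ?_
    rw [hg, diagonal_mul_diagonal, ← diagonal_one]
    exact congrArg diagonal (funext fun i => mul_inv_cancel₀ (hd i))
  show ((g⁻¹ : GL3) : Matrix (Fin 3) (Fin 3) ℝ)ᵀ = _
  rw [hinv, diagonal_transpose]

/-- A diagonal matrix fixes `[e₁]`, so its action commutes with the junk value `mk' 0 = [e₁]`. -/
lemma RP2.mapMat_dualGL_mk'_of_val_eq_diagonal {g : GL3} {d : V3}
    (hg : (g : Matrix (Fin 3) (Fin 3) ℝ) = diagonal d) (v : V3) :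
    RP2.mapMat (dualGL g) (RP2.mk' v) = RP2.mk' fun i => v i / d i := by
  have hmul : ∀ w : V3, ((dualGL g : GL3) : Matrix (Fin 3) (Fin 3) ℝ) *ᵥ w = fun i => w i / d i :=
    fun w => funext fun i => by
      rw [dualGL_val_of_val_eq_diagonal hg, mulVec_diagonal, Pi.inv_apply, div_eq_inv_mul]
  by_cases hv : v = 0
  · have hmk0 : RP2.mk' 0 = RP2.mk ![1, 0, 0] e1_ne := dif_pos rfl
    have he1 : (fun i => (![1, 0, 0] : V3) i / d i) = (d 0)⁻¹ • ![1, 0, 0] := by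
      funext i
      fin_cases i <;> simp [div_eq_inv_mul]
    rw [hv, hmk0, RP2.mapMat_mk, ← RP2.mk'_eq_mk (GL3.mulVec_ne e1_ne), hmul, he1,
      RP2.mk'_smul (inv_ne_zero (GL3.ne_zero_of_val_eq_diagonal hg 0)), RP2.mk'_eq_mk e1_ne, ← hmk0]
    simp_rw [Pi.zero_apply, zero_div]
    rfl
  · rw [RP2.mk'_eq_mk hv, RP2.mapMat_mk, ← RP2.mk'_eq_mk (GL3.mulVec_ne hv), hmul]

lemma RP2.mapMat_dualGL_mk'_of_val_eq_diagonal_one {g : GL3} {b c : ℝ}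
    (hg : (g : Matrix (Fin 3) (Fin 3) ℝ) = diagonal ![1, b, c]) (v : V3) :
    RP2.mapMat (dualGL g) (RP2.mk' v) = RP2.mk' ![c * v 0, c / b * v 1, v 2] := by
  have hb : b ≠ 0 := by simpa using GL3.ne_zero_of_val_eq_diagonal hg 1
  have hc : c ≠ 0 := by simpa using GL3.ne_zero_of_val_eq_diagonal hg 2
  rw [RP2.mapMat_dualGL_mk'_of_val_eq_diagonal hg, ← RP2.mk'_smul hc]
  congr 1
  funext i
  fin_cases i <;> simp <;> field_simp

section UnbalancedAlpha

variable {β γ : ℕ → ℝ} {l : ℝ} {A : ℕ → GL3}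

lemma tendsto_mapMat_dualGL_of_diagonal
    (hA : ∀ n, (A n : Matrix (Fin 3) (Fin 3) ℝ) = diagonal ![1, β n, γ n])
    (hγ : Tendsto γ atTop (𝓝 0)) (hratio : Tendsto (fun n => γ n / β n) atTop (𝓝 l))
    {φ : ℕ → ℕ} (hφ : Tendsto φ atTop atTop) {u : ℕ → RP2} {f : V3} {hf : f ≠ 0}
    (hu : Tendsto u atTop (𝓝 (RP2.mk f hf))) (hT : (![0, l * f 1, f 2] : V3) ≠ 0) :
    Tendsto (fun k => RP2.mapMat (dualGL (A (φ k))) (u k)) atTop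
      (𝓝 (RP2.mk ![0, l * f 1, f 2] hT)) := by
  obtain ⟨w, c, hc, hw, hwu⟩ := RP2.exists_lift_of_tendsto hu
  have hwi : ∀ i, Tendsto (fun k => w k i) atTop (𝓝 (c * f i)) := fun i =>
    (continuous_apply i).continuousAt.tendsto.comp hw
  have hlim : Tendsto (fun k => ![γ (φ k) * w k 0, γ (φ k) / β (φ k) * w k 1, w k 2]) atTop
      (𝓝 (c • ![0, l * f 1, f 2])) := by
    have h := ((hγ.comp hφ).mul (hwi 0)).matrixVecCons (((hratio.comp hφ).mul (hwi 1)).matrixVecCons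
      ((hwi 2).matrixVecCons (tendsto_const_nhds (x := ![]))))
    have hlimit : c • ![0, l * f 1, f 2] = ![0 * (c * f 0), l * (c * f 1), c * f 2] := by
      funext i
      fin_cases i <;> simp [mul_left_comm]
    rwa [hlimit]
  have hmk : RP2.mk (c • ![0, l * f 1, f 2]) (smul_ne_zero hc hT) = RP2.mk ![0, l * f 1, f 2] hT :=
    (RP2.mk_eq_mk_iff.2 ⟨c⁻¹, inv_ne_zero hc, by rw [smul_smul, inv_mul_cancel₀ hc, one_smul]⟩)
  rw [← hmk]
  refine (RP2.tendsto_mk' _ hlim).congr' ?_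
  filter_upwards [hwu] with k hk
  rw [← hk, RP2.mapMat_dualGL_mk'_of_val_eq_diagonal_one (hA (φ k))]

lemma mem_dynSet_mapMat_dualGL_of_coord_zero_ne_zero
    (hA : ∀ n, (A n : Matrix (Fin 3) (Fin 3) ℝ) = diagonal ![1, β n, γ n])
    (hβ : Tendsto β atTop (𝓝 0)) (hγ : Tendsto γ atTop (𝓝 0)) {w : V3} (hw : w ≠ 0)
    (h0 : w 0 ≠ 0) :
    RP2.mk w hw ∈ DynSet (fun n => RP2.mapMat (dualGL (A n))) (RP2.mk ![1, 0, 0] e1_ne) := by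
  refine mem_dynSet_of_tendsto (u := fun n => RP2.mk' ![w 0, β n * w 1, γ n * w 2]) ?_ ?_
  · have h := (tendsto_const_nhds (x := w 0)).matrixVecCons ((hβ.mul_const (w 1)).matrixVecCons
      ((hγ.mul_const (w 2)).matrixVecCons (tendsto_const_nhds (x := ![]))))
    simp only [zero_mul] at h
    have hW : (![w 0, 0, 0] : V3) ≠ 0 := ne_zero_of_coord 0 (by simpa using h0)
    have he : RP2.mk ![w 0, 0, 0] hW = RP2.mk ![1, 0, 0] e1_ne := by
      refine (RP2.mk_eq_mk_iff.2 ⟨w 0, h0, ?_⟩).symm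
      funext i
      fin_cases i <;> simp
    exact he ▸ RP2.tendsto_mk' hW h
  · refine tendsto_const_nhds.congr fun n => ?_
    have hβn : β n ≠ 0 := by simpa using GL3.ne_zero_of_val_eq_diagonal (hA n) 1
    have hγn : γ n ≠ 0 := by simpa using GL3.ne_zero_of_val_eq_diagonal (hA n) 2
    rw [RP2.mapMat_dualGL_mk'_of_val_eq_diagonal_one (hA n), ← RP2.mk'_eq_mk hw, ← RP2.mk'_smul hγn]
    congr 1
    funext i
    fin_cases i <;> simp
    field_simp

lemma mem_dynSet_mapMat_dualGL_of_coord_zero_eq_zero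
    (hA : ∀ n, (A n : Matrix (Fin 3) (Fin 3) ℝ) = diagonal ![1, β n, γ n])
    (hβpos : ∀ n, 0 < β n) (hβ : Tendsto β atTop (𝓝 0))
    (hratio : Tendsto (fun n => γ n / β n) atTop (𝓝 l)) {w : V3} (hw : w ≠ 0) (h0 : w 0 = 0) :
    RP2.mk w hw ∈ DynSet (fun n => RP2.mapMat (dualGL (A n))) (RP2.mk ![1, 0, 0] e1_ne) := by
  have hs : Tendsto (fun n => √(β n)) atTop (𝓝 0) := by
    simpa [Function.comp_def] using (Real.continuous_sqrt.tendsto 0).comp hβ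
  refine mem_dynSet_of_tendsto
    (u := fun n => RP2.mk' ![1, √(β n) * w 1, γ n / β n * √(β n) * w 2]) ?_ ?_
  · have h := (tendsto_const_nhds (x := (1 : ℝ))).matrixVecCons ((hs.mul_const (w 1)).matrixVecCons
      (((hratio.mul hs).mul_const (w 2)).matrixVecCons (tendsto_const_nhds (x := ![]))))
    simp only [zero_mul, mul_zero] at h
    exact RP2.tendsto_mk' e1_ne h
  · have h := hs.matrixVecCons (tendsto_const_nhds (x := ![w 1, w 2]))
    have hw' : (Matrix.vecCons 0 ![w 1, w 2] : V3) = w := by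
      funext i
      fin_cases i <;> simp [h0]
    simp only [hw'] at h
    refine (RP2.tendsto_mk' hw h).congr fun n => ?_
    have hsn : √(β n) ≠ 0 := (Real.sqrt_pos.2 (hβpos n)).ne'
    have hγn : γ n ≠ 0 := by simpa using GL3.ne_zero_of_val_eq_diagonal (hA n) 2
    have hsq : √(β n) ^ 2 = β n := Real.sq_sqrt (hβpos n).le
    rw [RP2.mapMat_dualGL_mk'_of_val_eq_diagonal_one (hA n),
      ← RP2.mk'_smul (mul_ne_zero (div_ne_zero hγn (hβpos n).ne') hsn)]
    congr 1
    funext i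
    fin_cases i <;> simp <;> field_simp
    rw [hsq, div_self (hβpos n).ne']

end UnbalancedAlpha

theorem unbalanced_alpha_dual_dynamics_general
    (β γ : ℕ → ℝ) (hpos : ∀ n, 0 < γ n ∧ γ n ≤ β n ∧ β n ≤ 1)
    (hβ : Filter.Tendsto β Filter.atTop (nhds 0)) (l : ℝ) (hl0 : 0 < l)
    (hratio : Filter.Tendsto (fun n => γ n / β n) Filter.atTop (nhds l))
    (A : ℕ → GL3)
    (hA : ∀ n, (A n : Matrix (Fin 3) (Fin 3) ℝ) = Matrix.diagonal ![1, β n, γ n]) :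
    (∀ (f : V3) (hf : f ≠ 0), ¬(f 1 = 0 ∧ f 2 = 0) →
      DynSet (fun n => RP2.mapMat (dualGL (A n))) (RP2.mk f hf) =
        {RP2.mk' ![0, l * f 1, f 2]}) ∧
    DynSet (fun n => RP2.mapMat (dualGL (A n))) (RP2.mk ![1, 0, 0] e1_ne) = Set.univ := by
  have hβpos : ∀ n, 0 < β n := fun n => (hpos n).1.trans_le (hpos n).2.1
  have hγ : Tendsto γ atTop (𝓝 0) :=
    squeeze_zero (fun n => (hpos n).1.le) (fun n => (hpos n).2.1) hβ
  refine ⟨fun f hf hne => ?_, eq_univ_of_forall (RP2.ind fun w hw => ?_)⟩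
  · have hT : (![0, l * f 1, f 2] : V3) ≠ 0 := by
      rcases not_and_or.1 hne with h | h
      · exact ne_zero_of_coord 1 (by simpa using mul_ne_zero hl0.ne' h)
      · exact ne_zero_of_coord 2 (by simpa using h)
    rw [RP2.mk'_eq_mk hT]
    exact dynSet_eq_singleton fun φ hφ u hu =>
      tendsto_mapMat_dualGL_of_diagonal hA hγ hratio hφ.tendsto_atTop hu hT
  · by_cases h0 : w 0 = 0
    · exact mem_dynSet_mapMat_dualGL_of_coord_zero_eq_zero hA hβpos hβ hratio hw h0
    · exact mem_dynSet_mapMat_dualGL_of_coord_zero_ne_zero hA hβ hγ hw h0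

/-- Lemma 2.11 (unbalanced type α dynamics on the dual projective plane, diagonal
case).  A class `[f₁ : f₂ : f₃]*` of linear forms is recorded through its coefficient
vector, and `g` acts on it by `g · [f] = [f ∘ g⁻¹]`, i.e. through `dualGL g`. -/
theorem unbalanced_alpha_dual_dynamics
    (β γ : ℕ → ℝ) (hpos : ∀ n, 0 < γ n ∧ γ n ≤ β n ∧ β n ≤ 1)
    (hβ : Filter.Tendsto β Filter.atTop (nhds 0)) (l : ℝ) (hl0 : 0 < l) (hl1 : l ≤ 1)
    (hratio : Filter.Tendsto (fun n => γ n / β n) Filter.atTop (nhds l))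
    (A : ℕ → GL3)
    (hA : ∀ n, (A n : Matrix (Fin 3) (Fin 3) ℝ) = Matrix.diagonal ![1, β n, γ n]) :
    (∀ (f : V3) (hf : f ≠ 0), ¬(f 1 = 0 ∧ f 2 = 0) →
      DynSet (fun n => RP2.mapMat (dualGL (A n))) (RP2.mk f hf) =
        {RP2.mk' ![0, l * f 1, f 2]}) ∧
    DynSet (fun n => RP2.mapMat (dualGL (A n))) (RP2.mk ![1, 0, 0] e1_ne) = Set.univ :=
  unbalanced_alpha_dual_dynamics_general β γ hpos hβ l hl0 hratio A hA
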